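/- arXiv:2004.02321 — 5 statements merged into one kernel-verified Lean document; each statement's English description precedes it below -/
import Mathlib

section
/- Fix constants C > 0 and B > 0 and an integer K ≥ 1, and define β(δ) := B/(Cδ²), β_star(q,δ) := B / ln(1/(1 − q + q·exp(−Cδ²))), and β_tree(p,q,δ,K) := B / ln(1/(1 − q + q·(1 − p + p·exp(−Cδ²))^K)). Then for every p ∈ [0,1], q ∈ (0,1] and δ ∈ (0,1) such that the expressions are defined, β_tree(p,q,δ,K) ≥ β_star(q, √K·δ) ≥ β(√K·δ)/q, where β_star(q,√K·δ) = B / ln(1/(1 − q + q·exp(−C·K·δ²))) and β(√K·δ) = B/(C·K·δ²). -/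
lemma exp_convex_aux (t q : ℝ) (hq0 : 0 ≤ q) (hq1 : q ≤ 1) :
    Real.exp (q * t) ≤ 1 - q + q * Real.exp t := by
  have h := convexOn_exp.2 (Set.mem_univ t) (Set.mem_univ (0:ℝ)) hq0
    (by linarith : (0:ℝ) ≤ 1 - q) (by ring)
  simp only [smul_eq_mul, mul_zero, add_zero, Real.exp_zero, mul_one] at h
  linarith


theorem stmt7 (C B : ℝ) (hC : 0 < C) (hB : 0 < B) (K : ℕ) (hK : 1 ≤ K)
    (p q δ : ℝ) (hp0 : 0 ≤ p) (hp1 : p ≤ 1) (hq0 : 0 < q) (hq1 : q ≤ 1)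
    (hδ0 : 0 < δ) (hδ1 : δ < 1)
    -- definedness of β_tree (excludes the degenerate case where the log vanishes)
    (hdef : Real.log (1 / (1 - q + q * (1 - p + p * Real.exp (-C * δ ^ 2)) ^ K)) ≠ 0) :
    B / Real.log (1 / (1 - q + q * (1 - p + p * Real.exp (-C * δ ^ 2)) ^ K)) ≥
        B / Real.log (1 / (1 - q + q * Real.exp (-C * K * δ ^ 2))) ∧
      B / Real.log (1 / (1 - q + q * Real.exp (-C * K * δ ^ 2))) ≥
        (B / (C * K * δ ^ 2)) / q := by
  set a := Real.exp (-C * δ ^ 2) with ha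
  have ha0 : 0 < a := Real.exp_pos _
  have ha1 : a < 1 := by
    rw [ha, Real.exp_lt_one_iff]
    nlinarith [mul_pos hC (pow_pos hδ0 2)]
  have hm : a ≤ 1 - p + p * a := by nlinarith
  have hm0 : 0 < 1 - p + p * a := by nlinarith
  have hm1 : 1 - p + p * a ≤ 1 := by nlinarith
  have hK1 : (1:ℝ) ≤ (K:ℝ) := by exact_mod_cast hK
  have ht0 : 0 < C * K * δ ^ 2 := by positivity
  have heK : Real.exp (-C * K * δ ^ 2) = a ^ K := by
    rw [ha, ← Real.exp_nat_mul]; ring_nf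
  have haK0 : 0 < a ^ K := pow_pos ha0 K
  have haK1 : a ^ K < 1 := pow_lt_one₀ ha0.le ha1 (by omega)
  have haK : a ^ K ≤ (1 - p + p * a) ^ K := pow_le_pow_left₀ ha0.le hm K
  have hmK0 : 0 < (1 - p + p * a) ^ K := pow_pos hm0 K
  have hmK1 : (1 - p + p * a) ^ K ≤ 1 := pow_le_one₀ hm0.le hm1
  set xt := 1 - q + q * (1 - p + p * a) ^ K with hxt
  set xs := 1 - q + q * a ^ K with hxs
  have hxt0 : 0 < xt := by nlinarith
  have hxt1 : xt ≤ 1 := by nlinarith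
  have hxs0 : 0 < xs := by nlinarith
  have hxs1 : xs < 1 := by nlinarith
  have hxle : xs ≤ xt := by nlinarith
  have hlt0 : 0 < Real.log (1 / xt) := by
    have h1 : (1:ℝ) ≤ 1 / xt := by
      rw [le_div_iff₀ hxt0, one_mul]; exact hxt1
    rcases (Real.log_nonneg h1).lt_or_eq with h | h
    · exact h
    · exact absurd h.symm hdef
  have hls0 : 0 < Real.log (1 / xs) := by
    apply Real.log_pos
    rw [lt_div_iff₀ hxs0, one_mul]; exact hxs1
  have hll : Real.log (1 / xt) ≤ Real.log (1 / xs) :=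
    Real.log_le_log (by positivity) (by
      apply one_div_le_one_div_of_le hxs0 hxle)
  constructor
  · rw [heK]
    exact div_le_div_of_nonneg_left hB.le hlt0 hll
  · rw [heK]
    -- log (1/xs) ≤ q * (C K δ²)
    have hconv : Real.exp (q * (-(C * K * δ ^ 2))) ≤ xs := by
      have h2 := exp_convex_aux (-(C * K * δ ^ 2)) q hq0.le hq1
      have hx : Real.exp (-(C * K * δ ^ 2)) = a ^ K := by
        rw [← heK]; ring_nf
      rw [hx] at h2
      rw [hxs]; linarith
    have hlog : Real.log (1 / xs) ≤ q * (C * K * δ ^ 2) := by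
      rw [one_div, Real.log_inv]
      have := Real.log_le_log (Real.exp_pos _) hconv
      rw [Real.log_exp] at this
      linarith
    have : B / (q * (C * K * δ ^ 2)) ≤ B / Real.log (1 / xs) :=
      div_le_div_of_nonneg_left hB.le hls0 hlog
    calc (B / (C * K * δ ^ 2)) / q = B / (q * (C * K * δ ^ 2)) := by
          rw [div_div]; ring_nf
      _ ≤ B / Real.log (1 / xs) := this
end

section
/- Fix constants C > 0 and B > 0 and an integer K ≥ 1, and define β(δ) := B/(Cδ²), β_star(p,δ) := B / ln(1/(1 − p + p·exp(−Cδ²))), and β_serial(p,δ,K) := B / ln((1 − p·exp(−Cδ²)) / (1 − p + p·(1 − exp(−Cδ²))·(p·exp(−Cδ²))^K)). Then for every p ∈ (0,1] and δ ∈ (0,1), β_serial(p,δ,K) ≥ β_star(p, √K·δ) ≥ β(√K·δ)/p, where β_star(p,√K·δ) = B / ln(1/(1 − p + p·exp(−C·K·δ²))) and β(√K·δ) = B/(C·K·δ²). -/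
/-!
Write `q = exp (-C δ²) ∈ (0, 1)`, so that `exp (-C K δ²) = q ^ K`. Both bounds compare the
arguments of the logarithms. The first is the polynomial inequality
`(1 - p q) (1 - p + p q ^ K) ≤ 1 - p + p (1 - q) (p q) ^ K`, which after cancelling `p` says
that `q ^ K (1 - p q) - (1 - q) (p q) ^ K` is at most its value `q (1 - p)` at `K = 1`; this
sequence is antitone because its increments are `(1 - q) (1 - p q) ((p q) ^ K - q ^ K) ≤ 0`.
The second is convexity of `exp`: `exp (-p t) ≤ 1 - p + p exp (-t)`, i.e.
`log (1 / (1 - p + p exp (-t))) ≤ p t`.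
-/

open Real

section SerialStar

variable {p q : ℝ}

lemma pow_mul_one_sub_mul_sub_antitone (hp0 : 0 ≤ p) (hp1 : p ≤ 1) (hq0 : 0 ≤ q) (hq1 : q ≤ 1) :
    Antitone fun n : ℕ => q ^ n * (1 - p * q) - (1 - q) * (p * q) ^ n := by
  refine antitone_nat_of_succ_le fun n => ?_
  have hpow : (p * q) ^ n ≤ q ^ n := by
    rw [mul_pow]
    exact mul_le_of_le_one_left (pow_nonneg hq0 n) (pow_le_one₀ hp0 hp1)
  have hpq : p * q ≤ 1 := mul_le_one₀ hp1 hq0 hq1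
  have hincr : 0 ≤ (1 - q) * (1 - p * q) * (q ^ n - (p * q) ^ n) := by
    apply mul_nonneg (mul_nonneg _ _) _ <;> linarith
  simp only [pow_succ]
  nlinarith

lemma pow_mul_one_sub_mul_le (hp0 : 0 ≤ p) (hp1 : p ≤ 1) (hq0 : 0 ≤ q) (hq1 : q ≤ 1)
    {K : ℕ} (hK : 1 ≤ K) :
    q ^ K * (1 - p * q) ≤ q * (1 - p) + (1 - q) * (p * q) ^ K := by
  have := pow_mul_one_sub_mul_sub_antitone hp0 hp1 hq0 hq1 hK
  simp only [pow_one] at this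
  linarith

lemma one_sub_mul_mul_star_le_serial (hp0 : 0 ≤ p) (hp1 : p ≤ 1) (hq0 : 0 ≤ q) (hq1 : q ≤ 1)
    {K : ℕ} (hK : 1 ≤ K) :
    (1 - p * q) * (1 - p + p * q ^ K) ≤ 1 - p + p * (1 - q) * (p * q) ^ K := by
  have := mul_le_mul_of_nonneg_left (pow_mul_one_sub_mul_le hp0 hp1 hq0 hq1 hK) hp0
  linarith

lemma serial_lt_one_sub_mul (hp0 : 0 < p) (hp1 : p ≤ 1) (hq0 : 0 ≤ q) (hq1 : q < 1)
    {K : ℕ} (hK : 1 ≤ K) :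
    1 - p + p * (1 - q) * (p * q) ^ K < 1 - p * q := by
  have hpq : (p * q) ^ K < 1 :=
    pow_lt_one₀ (mul_nonneg hp0.le hq0) (by nlinarith) (by omega)
  have := mul_lt_mul_of_pos_left hpq (mul_pos hp0 (sub_pos.2 hq1))
  linarith

lemma log_serial_pos_and_le_log_star (hp0 : 0 < p) (hp1 : p ≤ 1) (hq0 : 0 < q) (hq1 : q < 1)
    {K : ℕ} (hK : 1 ≤ K) :
    0 < log ((1 - p * q) / (1 - p + p * (1 - q) * (p * q) ^ K)) ∧
      log ((1 - p * q) / (1 - p + p * (1 - q) * (p * q) ^ K)) ≤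
        log (1 / (1 - p + p * q ^ K)) := by
  have hstar : 0 < 1 - p + p * q ^ K := by
    have := mul_pos hp0 (pow_pos hq0 K)
    linarith
  have hserial : 0 < 1 - p + p * (1 - q) * (p * q) ^ K :=
    lt_of_lt_of_le (mul_pos (by nlinarith) hstar)
      (one_sub_mul_mul_star_le_serial hp0.le hp1 hq0.le hq1.le hK)
  refine ⟨log_pos ((one_lt_div hserial).2 (serial_lt_one_sub_mul hp0 hp1 hq0.le hq1 hK)), ?_⟩
  refine log_le_log (div_pos (by nlinarith) hserial) ?_
  rw [div_le_div_iff₀ hserial hstar, one_mul]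
  exact one_sub_mul_mul_star_le_serial hp0.le hp1 hq0.le hq1.le hK

end SerialStar

lemma exp_mul_le_one_sub_add_mul_exp {p : ℝ} (x : ℝ) (hp0 : 0 ≤ p) (hp1 : p ≤ 1) :
    exp (p * x) ≤ 1 - p + p * exp x := by
  have := convexOn_exp.2 (Set.mem_univ 0) (Set.mem_univ x) (sub_nonneg.2 hp1) hp0 (by ring)
  simpa only [smul_eq_mul, mul_zero, zero_add, exp_zero, mul_one] using this

lemma log_star_pos_and_le {p t : ℝ} (hp0 : 0 < p) (hp1 : p ≤ 1) (ht : 0 < t) :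
    0 < log (1 / (1 - p + p * exp (-t))) ∧ log (1 / (1 - p + p * exp (-t))) ≤ t * p := by
  have hconv := exp_mul_le_one_sub_add_mul_exp (-t) hp0.le hp1
  have hstar : 0 < 1 - p + p * exp (-t) := (exp_pos _).trans_le hconv
  have hexp : exp (-t) < 1 := exp_lt_one_iff.2 (neg_lt_zero.2 ht)
  refine ⟨log_pos ((one_lt_div hstar).2 (by nlinarith)), ?_⟩
  rw [one_div, log_inv, neg_le, ← log_exp (-(t * p))]
  exact log_le_log (exp_pos _) (by rwa [mul_neg, mul_comm] at hconv)

theorem stmt9_general (C B : ℝ) (hC : 0 < C) (hB : 0 < B) (K : ℕ) (hK : 1 ≤ K)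
    (p δ : ℝ) (hp0 : 0 < p) (hp1 : p ≤ 1) (hδ0 : 0 < δ) :
    B / Real.log ((1 - p * Real.exp (-C * δ ^ 2)) /
        (1 - p + p * (1 - Real.exp (-C * δ ^ 2)) * (p * Real.exp (-C * δ ^ 2)) ^ K)) ≥
        B / Real.log (1 / (1 - p + p * Real.exp (-C * K * δ ^ 2))) ∧
      B / Real.log (1 / (1 - p + p * Real.exp (-C * K * δ ^ 2))) ≥
        (B / (C * K * δ ^ 2)) / p := by
  have hq1 : exp (-C * δ ^ 2) < 1 := exp_lt_one_iff.2 (by nlinarith [pow_pos hδ0 2])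
  have hqK : exp (-C * K * δ ^ 2) = exp (-C * δ ^ 2) ^ K := by
    rw [← exp_nat_mul]; ring_nf
  obtain ⟨hserial_pos, hserial_le⟩ := log_serial_pos_and_le_log_star hp0 hp1 (exp_pos _) hq1 hK
  have ht : 0 < C * K * δ ^ 2 := by
    have : (0 : ℝ) < K := by exact_mod_cast hK
    positivity
  obtain ⟨hstar_pos, hstar_le⟩ := log_star_pos_and_le hp0 hp1 ht
  have hneg : -(C * K * δ ^ 2) = -C * K * δ ^ 2 := by ring
  rw [hneg] at hstar_pos hstar_le
  refine ⟨?_, ?_⟩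
  · rw [hqK]
    exact div_le_div_of_nonneg_left hB.le hserial_pos hserial_le
  · rw [div_div]
    exact div_le_div_of_nonneg_left hB.le hstar_pos hstar_le

theorem stmt9 (C B : ℝ) (hC : 0 < C) (hB : 0 < B) (K : ℕ) (hK : 1 ≤ K)
    (p δ : ℝ) (hp0 : 0 < p) (hp1 : p ≤ 1) (hδ0 : 0 < δ) (hδ1 : δ < 1) :
    B / Real.log ((1 - p * Real.exp (-C * δ ^ 2)) /
        (1 - p + p * (1 - Real.exp (-C * δ ^ 2)) * (p * Real.exp (-C * δ ^ 2)) ^ K)) ≥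
        B / Real.log (1 / (1 - p + p * Real.exp (-C * K * δ ^ 2))) ∧
      B / Real.log (1 / (1 - p + p * Real.exp (-C * K * δ ^ 2))) ≥
        (B / (C * K * δ ^ 2)) / p :=
  stmt9_general C B hC hB K hK p δ hp0 hp1 hδ0
end

section
/- Fix constants C > 0 and B > 0 and an integer K ≥ 1, and define β_serial(p,δ,K) := B / ln((1 − p·exp(−Cδ²)) / (1 − p + p·(1 − exp(−Cδ²))·(p·exp(−Cδ²))^K)). Then for every fixed δ ∈ (0,1), β_serial(·,δ,K) is strictly decreasing in p on (0,1]: if 0 < p₁ < p₂ ≤ 1 then β_serial(p₂,δ,K) < β_serial(p₁,δ,K). -/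
theorem stmt10 (C B : ℝ) (hC : 0 < C) (hB : 0 < B) (K : ℕ) (hK : 1 ≤ K)
    (δ : ℝ) (hδ0 : 0 < δ) (hδ1 : δ < 1)
    (p₁ p₂ : ℝ) (hp₁ : 0 < p₁) (h12 : p₁ < p₂) (hp₂ : p₂ ≤ 1) :
    B / Real.log ((1 - p₂ * Real.exp (-C * δ ^ 2)) /
        (1 - p₂ + p₂ * (1 - Real.exp (-C * δ ^ 2)) * (p₂ * Real.exp (-C * δ ^ 2)) ^ K)) <
      B / Real.log ((1 - p₁ * Real.exp (-C * δ ^ 2)) /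
        (1 - p₁ + p₁ * (1 - Real.exp (-C * δ ^ 2)) * (p₁ * Real.exp (-C * δ ^ 2)) ^ K)) := by
  set q := Real.exp (-C * δ ^ 2) with hqdef
  have hq0 : 0 < q := Real.exp_pos _
  have hq1 : q < 1 := by
    rw [hqdef, Real.exp_lt_one_iff]
    nlinarith [mul_pos hC (pow_pos hδ0 2)]
  set G : ℝ → ℝ := fun p => (1 - q) * (p * ∑ i ∈ Finset.range K, (p * q) ^ i) with hGdef
  -- key facts for each p ∈ (0,1]
  have key : ∀ p : ℝ, 0 < p → p ≤ 1 →
      Real.log ((1 - p * q) / (1 - p + p * (1 - q) * (p * q) ^ K))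
        = -Real.log (1 - G p) ∧ 0 < G p ∧ G p < 1 := by
    intro p hp0 hp1
    have hpq1 : p * q < 1 := by nlinarith
    have hN : 0 < 1 - p * q := by linarith
    have hgeo : (∑ i ∈ Finset.range K, (p * q) ^ i) * (p * q - 1) = (p * q) ^ K - 1 :=
      geom_sum_mul (p * q) K
    have hqgeo : (∑ i ∈ Finset.range K, q ^ i) * (q - 1) = q ^ K - 1 :=
      geom_sum_mul q K
    have hD : 1 - p + p * (1 - q) * (p * q) ^ K = (1 - p * q) * (1 - G p) := by
      simp only [hGdef]
      linear_combination (-(1 - q) * p) * hgeo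
    have hS1 : (1 : ℝ) ≤ ∑ i ∈ Finset.range K, (p * q) ^ i := by
      have h0 : (0 : ℕ) ∈ Finset.range K := Finset.mem_range.mpr hK
      have := Finset.single_le_sum (f := fun i => (p * q) ^ i)
        (fun i _ => pow_nonneg (by positivity) i) h0
      simpa using this
    have hG0 : 0 < G p := by
      have : 0 < p * ∑ i ∈ Finset.range K, (p * q) ^ i := by positivity
      have h1q : 0 < 1 - q := by linarith
      exact mul_pos h1q this
    have hG1 : G p < 1 := by
      have hle : p * ∑ i ∈ Finset.range K, (p * q) ^ i ≤ ∑ i ∈ Finset.range K, q ^ i := by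
        rw [Finset.mul_sum]
        apply Finset.sum_le_sum
        intro i _
        have h1 : (p * q) ^ i ≤ q ^ i := by
          apply pow_le_pow_left₀ (by positivity)
          nlinarith
        have h2 : (0:ℝ) ≤ q ^ i := by positivity
        nlinarith
      have hqK : 0 < q ^ K := by positivity
      have : (1 - q) * (p * ∑ i ∈ Finset.range K, (p * q) ^ i)
          ≤ (1 - q) * ∑ i ∈ Finset.range K, q ^ i := by
        apply mul_le_mul_of_nonneg_left hle (by linarith)
      have heq : (1 - q) * ∑ i ∈ Finset.range K, q ^ i = 1 - q ^ K := by
        linear_combination -hqgeo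
      simp only [hGdef]
      nlinarith
    refine ⟨?_, hG0, hG1⟩
    rw [hD]
    have hNne : (1 : ℝ) - p * q ≠ 0 := by linarith
    have hratio : (1 - p * q) / ((1 - p * q) * (1 - G p)) = (1 - G p)⁻¹ := by
      rw [← div_div, div_self hNne, one_div]
    rw [hratio, Real.log_inv]
  obtain ⟨hL1, hG10, hG11⟩ := key p₁ hp₁ (le_of_lt (lt_of_lt_of_le h12 hp₂))
  obtain ⟨hL2, hG20, hG21⟩ := key p₂ (lt_trans hp₁ h12) hp₂
  -- G is strictly increasing
  have hGmono : G p₁ < G p₂ := by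
    have hp₂0 : 0 < p₂ := lt_trans hp₁ h12
    have hsum : p₁ * ∑ i ∈ Finset.range K, (p₁ * q) ^ i
        < p₂ * ∑ i ∈ Finset.range K, (p₂ * q) ^ i := by
      rw [Finset.mul_sum, Finset.mul_sum]
      apply Finset.sum_lt_sum_of_nonempty
      · exact Finset.nonempty_range_iff.mpr (by omega)
      · intro i _
        have h1 : (p₁ * q) ^ i ≤ (p₂ * q) ^ i := by
          apply pow_le_pow_left₀ (by positivity)
          nlinarith
        have h2 : (0:ℝ) < (p₂ * q) ^ i := by positivity
        nlinarith
    simp only [hGdef]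
    apply mul_lt_mul_of_pos_left hsum (by linarith)
  rw [hL1, hL2]
  have hlog2 : Real.log (1 - G p₂) < Real.log (1 - G p₁) :=
    Real.log_lt_log (by linarith) (by linarith)
  have hlog1neg : Real.log (1 - G p₁) < 0 :=
    Real.log_neg (by linarith) (by linarith)
  have h1 : 0 < -Real.log (1 - G p₁) := by linarith
  exact div_lt_div_of_pos_left hB h1 (by linarith)
end

section
/- For every integer K ≥ 1, every real p ∈ [0,1], and every real d ∈ (0,1], the inequality 1 − p − d^{K−1}·(1 − p^K) + d^K·(p − p^K) ≥ 0 holds (with equality when d = 1). -/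
theorem stmt15 (K : ℕ) (hK : 1 ≤ K) (p d : ℝ) (hp0 : 0 ≤ p) (hp1 : p ≤ 1)
    (hd0 : 0 < d) (hd1 : d ≤ 1) :
    1 - p - d ^ (K - 1) * (1 - p ^ K) + d ^ K * (p - p ^ K) ≥ 0 ∧
      (d = 1 → 1 - p - d ^ (K - 1) * (1 - p ^ K) + d ^ K * (p - p ^ K) = 0) := by
  constructor
  · set S : ℝ := ∑ i ∈ Finset.range K, p ^ i with hSdef
    set T : ℝ := ∑ i ∈ Finset.range K, d ^ i with hTdef
    have hS : S * (p - 1) = p ^ K - 1 := geom_sum_mul p K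
    have hT : T * (d - 1) = d ^ K - 1 := geom_sum_mul d K
    have hpow : d ^ (K - 1) * d = d ^ K := by
      rw [← pow_succ, Nat.sub_add_cancel hK]
    -- S ≤ K
    have hSK : S ≤ (K : ℝ) := by
      calc S ≤ ∑ _i ∈ Finset.range K, (1 : ℝ) := by
              apply Finset.sum_le_sum
              intro i _
              exact pow_le_one₀ hp0 hp1
        _ = (K : ℝ) := by simp
    have hS0 : 0 ≤ S := Finset.sum_nonneg fun i _ => pow_nonneg hp0 i
    -- K * d^(K-1) ≤ T
    have hTK : (K : ℝ) * d ^ (K - 1) ≤ T := by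
      calc (K : ℝ) * d ^ (K - 1) = ∑ _i ∈ Finset.range K, d ^ (K - 1) := by simp
        _ ≤ T := by
              apply Finset.sum_le_sum
              intro i hi
              exact pow_le_pow_of_le_one hd0.le hd1
                (Nat.le_pred_of_lt (Finset.mem_range.mp hi))
    have hdpow0 : (0:ℝ) ≤ d ^ (K - 1) := pow_nonneg hd0.le _
    have h1d : (0:ℝ) ≤ 1 - d := by linarith
    -- key: d^(K-1) * (1-d) * S ≤ 1 - d^K
    have hkey : d ^ (K - 1) * (1 - d) * S ≤ 1 - d ^ K := by
      calc d ^ (K - 1) * (1 - d) * S ≤ d ^ (K - 1) * (1 - d) * (K : ℝ) := by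
            apply mul_le_mul_of_nonneg_left hSK (mul_nonneg hdpow0 h1d)
        _ = (1 - d) * ((K : ℝ) * d ^ (K - 1)) := by ring
        _ ≤ (1 - d) * T := mul_le_mul_of_nonneg_left hTK h1d
        _ = 1 - d ^ K := by nlinarith [hT]
    -- factorization
    have hfac : 1 - p - d ^ (K - 1) * (1 - p ^ K) + d ^ K * (p - p ^ K)
        = (1 - p) * (1 - d ^ K - d ^ (K - 1) * (1 - d) * S) := by
      have h1 : 1 - p ^ K = (1 - p) * S := by nlinarith [hS]
      have h2 : p - p ^ K = (1 - p) * (S - 1) := by nlinarith [hS]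
      rw [h1, h2, ← hpow]; ring
    rw [hfac]
    have := mul_nonneg (by linarith : (0:ℝ) ≤ 1 - p) (by linarith : 0 ≤ 1 - d ^ K - d ^ (K - 1) * (1 - d) * S)
    linarith
  · intro h
    subst h
    simp
end

section
/- Fix an integer K ≥ 1 and a real d ∈ (0,1). Then the function f₃(p) := (1 − p·d) / (1 − p + p·(1 − d)·(p·d)^K) is strictly increasing in p on [0,1]: if 0 ≤ p₁ < p₂ ≤ 1 then f₃(p₁) < f₃(p₂). -/
theorem stmt17 (K : ℕ) (hK : 1 ≤ K) (d : ℝ) (hd0 : 0 < d) (hd1 : d < 1)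
    (p₁ p₂ : ℝ) (hp₁ : 0 ≤ p₁) (h12 : p₁ < p₂) (hp₂ : p₂ ≤ 1) :
    (1 - p₁ * d) / (1 - p₁ + p₁ * (1 - d) * (p₁ * d) ^ K) <
      (1 - p₂ * d) / (1 - p₂ + p₂ * (1 - d) * (p₂ * d) ^ K) := by
  set S : ℝ → ℝ := fun p => ∑ j ∈ Finset.range K, p ^ (j + 1) * d ^ j with hSdef
  have hS : ∀ p : ℝ, S p = p * ∑ j ∈ Finset.range K, (p * d) ^ j := by
    intro p
    rw [hSdef, Finset.mul_sum]
    exact Finset.sum_congr rfl fun j _ => by ring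
  have hfact : ∀ p : ℝ, 1 - p + p * (1 - d) * (p * d) ^ K
      = (1 - p * d) * (1 - (1 - d) * S p) := by
    intro p
    have h2 : (1 - p * d) * S p = p * (1 - (p * d) ^ K) := by
      rw [hS]
      linear_combination (-p) * geom_sum_mul (p * d) K
    linear_combination (1 - d) * h2
  have hGpos : ∀ p : ℝ, 0 ≤ p → p ≤ 1 → d ^ K ≤ 1 - (1 - d) * S p := by
    intro p hp0 hp1
    have hsum : S p ≤ ∑ j ∈ Finset.range K, d ^ j := by
      apply Finset.sum_le_sum
      intro j _
      have h1 : p ^ (j + 1) ≤ 1 := pow_le_one₀ hp0 hp1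
      have h2 : (0:ℝ) ≤ d ^ j := pow_nonneg hd0.le j
      nlinarith
    have hgeom : (1 - d) * ∑ j ∈ Finset.range K, d ^ j = 1 - d ^ K := by
      linear_combination (-1 : ℝ) * geom_sum_mul d K
    nlinarith
  have hN : ∀ p : ℝ, 0 ≤ p → p ≤ 1 → 0 < 1 - p * d := by
    intro p hp0 hp1; nlinarith
  have hdK : (0:ℝ) < d ^ K := pow_pos hd0 K
  have hSlt : S p₁ < S p₂ := by
    apply Finset.sum_lt_sum
    · intro j _
      have := pow_le_pow_left₀ hp₁ h12.le (j + 1)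
      have h2 : (0:ℝ) ≤ d ^ j := pow_nonneg hd0.le j
      nlinarith
    · refine ⟨0, Finset.mem_range.mpr hK, ?_⟩
      simpa using h12
  have hG1 : d ^ K ≤ 1 - (1 - d) * S p₁ := hGpos p₁ hp₁ (le_of_lt (lt_of_lt_of_le h12 hp₂))
  have hG2 : d ^ K ≤ 1 - (1 - d) * S p₂ := hGpos p₂ (le_trans hp₁ h12.le) hp₂
  have hGlt : 1 - (1 - d) * S p₂ < 1 - (1 - d) * S p₁ := by nlinarith
  have hN1 := hN p₁ hp₁ (le_of_lt (lt_of_lt_of_le h12 hp₂))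
  have hN2 := hN p₂ (le_trans hp₁ h12.le) hp₂
  rw [hfact p₁, hfact p₂, div_mul_eq_div_div, div_mul_eq_div_div,
    div_self hN1.ne', div_self hN2.ne']
  apply one_div_lt_one_div_of_lt
  · linarith
  · exact hGlt
end
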